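/- If I is an ideal of Lmc(S), then E⁻(E(I)) is the smallest e-ideal containing I. In particular, every maximal ideal of Lmc(S) is an e-ideal. -/

import Mathlib

open scoped BoundedContinuousFunction
open WeakDual

/-- A semitopological semigroup: multiplication is separately continuous. -/
class SemitopologicalSemigroup (S : Type*) [TopologicalSpace S] [Mul S] : Prop where
  continuous_mul_left : ∀ s : S, Continuous fun x : S => s * x
  continuous_mul_right : ∀ s : S, Continuous fun x : S => x * s

/-- Left translate `L_s f (x) = f (s x)` as a bounded continuous function. -/
noncomputable def lTrans {S : Type*} [TopologicalSpace S] [Mul S] [SemitopologicalSemigroup S]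
    (s : S) (f : S →ᵇ ℂ) : S →ᵇ ℂ :=
  f.compContinuous ⟨fun x => s * x, SemitopologicalSemigroup.continuous_mul_left s⟩

/-- The left multiplicatively continuous functions: `f ∈ Lmc S` iff `T_μ f` is (bounded)
continuous for every character `μ` of `CB(S) = S →ᵇ ℂ` (i.e. every `μ ∈ βS`). -/
def Lmc (S : Type*) [TopologicalSpace S] [Mul S] [SemitopologicalSemigroup S] :
    Set (S →ᵇ ℂ) :=
  {f | ∀ μ : characterSpace ℂ (S →ᵇ ℂ), Continuous fun s : S => (μ (lTrans s f) : ℂ)}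

/-- `E_ε(f) = {x ∈ S : |f x| ≤ ε}`. -/
def Eset {S : Type*} [TopologicalSpace S] (ε : ℝ) (f : S →ᵇ ℂ) : Set S :=
  {x : S | ‖f x‖ ≤ ε}

/-- A zero set of `Lmc S`: `Z(f) = f⁻¹({0})` for some `f ∈ Lmc S`. -/
def IsZeroSet {S : Type*} [TopologicalSpace S] [Mul S] [SemitopologicalSemigroup S]
    (A : Set S) : Prop :=
  ∃ f ∈ Lmc S, A = {x : S | f x = 0}

/-- `E(I) = {E_ε(f) : f ∈ I, ε > 0}`. -/
def Efam {S : Type*} [TopologicalSpace S] [Mul S] [SemitopologicalSemigroup S]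
    (I : Set (S →ᵇ ℂ)) : Set (Set S) :=
  {A | ∃ f ∈ I, ∃ ε : ℝ, 0 < ε ∧ A = Eset ε f}

/-- `E⁻(𝒜) = {f ∈ Lmc S : E_ε(f) ∈ 𝒜 for all ε > 0}`. -/
def Einv {S : Type*} [TopologicalSpace S] [Mul S] [SemitopologicalSemigroup S]
    (𝒜 : Set (Set S)) : Set (S →ᵇ ℂ) :=
  {f | f ∈ Lmc S ∧ ∀ ε : ℝ, 0 < ε → Eset ε f ∈ 𝒜}

/-- A `z`-filter on `Lmc S`. -/
structure IsZFilter {S : Type*} [TopologicalSpace S] [Mul S] [SemitopologicalSemigroup S]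
    (𝒜 : Set (Set S)) : Prop where
  zero_sets : ∀ A ∈ 𝒜, IsZeroSet A
  not_empty_mem : ∅ ∉ 𝒜
  univ_mem : Set.univ ∈ 𝒜
  inter_mem : ∀ A ∈ 𝒜, ∀ B ∈ 𝒜, A ∩ B ∈ 𝒜
  superset_mem : ∀ A ∈ 𝒜, ∀ B : Set S, IsZeroSet B → A ⊆ B → B ∈ 𝒜

/-- An ideal of the algebra `Lmc S`. -/
structure IsIdealLmc {S : Type*} [TopologicalSpace S] [Mul S] [SemitopologicalSemigroup S]
    (I : Set (S →ᵇ ℂ)) : Prop where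
  subset_lmc : I ⊆ Lmc S
  zero_mem : (0 : S →ᵇ ℂ) ∈ I
  add_mem : ∀ f ∈ I, ∀ g ∈ I, f + g ∈ I
  mul_mem : ∀ f ∈ Lmc S, ∀ g ∈ I, f * g ∈ I

/-- A maximal (proper) ideal of `Lmc S`. -/
def IsMaximalIdealLmc {S : Type*} [TopologicalSpace S] [Mul S] [SemitopologicalSemigroup S]
    (M : Set (S →ᵇ ℂ)) : Prop :=
  IsIdealLmc M ∧ M ≠ Lmc S ∧ ∀ J, IsIdealLmc J → J ≠ Lmc S → M ⊆ J → J = M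

/-- An `e`-filter: a `z`-filter with `E(E⁻(𝒜)) = 𝒜`. -/
def IsEFilter {S : Type*} [TopologicalSpace S] [Mul S] [SemitopologicalSemigroup S]
    (𝒜 : Set (Set S)) : Prop :=
  IsZFilter 𝒜 ∧ Efam (Einv 𝒜) = 𝒜

/-- An `e`-ideal: an ideal with `E⁻(E(I)) = I`. -/
def IsEIdeal {S : Type*} [TopologicalSpace S] [Mul S] [SemitopologicalSemigroup S]
    (I : Set (S →ᵇ ℂ)) : Prop :=
  IsIdealLmc I ∧ Einv (Efam I) = I

/-- An `e`-ultrafilter: a maximal `e`-filter. -/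
def IsEUltrafilter {S : Type*} [TopologicalSpace S] [Mul S] [SemitopologicalSemigroup S]
    (p : Set (Set S)) : Prop :=
  IsEFilter p ∧ ∀ q, IsEFilter q → p ⊆ q → q = p

/-- The sum `p + q` of two families of zero sets: `A ∈ p + q` iff `A = E_ε(f)` for some `ε > 0`,
`f ∈ Lmc S`, with `E_δ(q, f) = {x : λ_x⁻¹(E_δ(f)) ∈ q} ∈ p` for all `δ > 0`. -/
def eAdd {S : Type*} [TopologicalSpace S] [Mul S] [SemitopologicalSemigroup S]
    (p q : Set (Set S)) : Set (Set S) :=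
  {A | ∃ ε : ℝ, 0 < ε ∧ ∃ f ∈ Lmc S, A = Eset ε f ∧
    ∀ δ : ℝ, 0 < δ → {x : S | (fun t => x * t) ⁻¹' Eset δ f ∈ q} ∈ p}

/-- The principal `e`-ultrafilter `e(a) = {E_ε(f) : f ∈ Lmc S, f a = 0, ε > 0}`. -/
def ePrinc {S : Type*} [TopologicalSpace S] [Mul S] [SemitopologicalSemigroup S]
    (a : S) : Set (Set S) :=
  {A | ∃ f ∈ Lmc S, f a = 0 ∧ ∃ ε : ℝ, 0 < ε ∧ A = Eset ε f}


/-!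
`E(I)` is upward closed among the sets `E_ε(f)`, `f ∈ Lmc S`: if `E_δ(g) ⊆ E_ε(f)` with
`g ∈ I`, then `h = max(|f|, ε) · (δ / max(|g|, δ)) · g` lies in `I` and `E_{εδ}(h) = E_ε(f)`.
The auxiliary functions stay in `Lmc S` because characters of `CB(S)` commute with the
continuous functional calculus. Together with `E_η(|k₁|² + |k₂|²) ⊆ E_{δ₁}(k₁) ∩ E_{δ₂}(k₂)`
this makes `E⁻(E(I))` an ideal with `E(E⁻(E(I))) = E(I)`, and minimality is monotonicity of
`E` and `E⁻`. For a maximal ideal `M`, `E⁻(E(M))` is proper: otherwise `E_{1/2}(1) = ∅` is some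
`E_δ(k)` with `k ∈ M`, so `k` is bounded away from `0` and invertible in `Lmc S`.
-/

open BoundedContinuousFunction

section FunctionalCalculus

variable {S : Type*} [TopologicalSpace S]

lemma Complex.cfc_eq (φ : ℂ → ℂ) (z : ℂ) : cfc φ z = φ z :=
  cfc_algebraMap (A := ℂ) z φ

lemma BoundedContinuousFunction.cfc_apply_of_continuous {φ : ℂ → ℂ} (hφ : Continuous φ)
    (b : S →ᵇ ℂ) (x : S) : cfc φ b x = φ (b x) := by
  have := ((ContinuousMap.evalStarAlgHom ℂ ℂ x).comp (toContinuousMapStarₐ ℂ)).map_cfc φ b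
    (hφ := (evalCLM ℂ x).continuous)
  simpa [Complex.cfc_eq] using this

lemma WeakDual.CharacterSpace.map_cfc (μ : characterSpace ℂ (S →ᵇ ℂ)) {φ : ℂ → ℂ}
    (hφ : Continuous φ) (b : S →ᵇ ℂ) : μ (cfc φ b) = φ (μ b) := by
  rw [StarAlgHomClass.map_cfc (S := ℂ) μ φ b, Complex.cfc_eq]

lemma norm_star_mul_self_add_star_mul_self_apply (a b : S →ᵇ ℂ) (x : S) :
    ‖(star a * a + star b * b) x‖ = ‖a x‖ ^ 2 + ‖b x‖ ^ 2 := by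
  have hval : (star a * a + star b * b) x = ((‖a x‖ ^ 2 + ‖b x‖ ^ 2 : ℝ) : ℂ) := by
    simp only [BoundedContinuousFunction.add_apply, mul_apply, star_apply, Complex.star_def,
      RCLike.conj_mul]
    norm_cast
  rw [hval, Complex.norm_real, Real.norm_of_nonneg (by positivity)]

end FunctionalCalculus

section Lmc

variable {S : Type*} [TopologicalSpace S] [Mul S] [SemitopologicalSemigroup S]

lemma lTrans_add (s : S) (f g : S →ᵇ ℂ) : lTrans s (f + g) = lTrans s f + lTrans s g := rfl

lemma lTrans_mul (s : S) (f g : S →ᵇ ℂ) : lTrans s (f * g) = lTrans s f * lTrans s g := rfl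

lemma lTrans_one (s : S) : lTrans s (1 : S →ᵇ ℂ) = 1 := rfl

lemma lTrans_cfc (s : S) {φ : ℂ → ℂ} (hφ : Continuous φ) (b : S →ᵇ ℂ) :
    lTrans s (cfc φ b) = cfc φ (lTrans s b) := by
  ext x
  simp only [lTrans, compContinuous_apply, cfc_apply_of_continuous hφ]

lemma add_mem_lmc {f g : S →ᵇ ℂ} (hf : f ∈ Lmc S) (hg : g ∈ Lmc S) : f + g ∈ Lmc S := fun μ => by
  simp only [lTrans_add, map_add]
  exact (hf μ).add (hg μ)

lemma mul_mem_lmc {f g : S →ᵇ ℂ} (hf : f ∈ Lmc S) (hg : g ∈ Lmc S) : f * g ∈ Lmc S := fun μ => by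
  simp only [lTrans_mul, map_mul]
  exact (hf μ).mul (hg μ)

lemma one_mem_lmc : (1 : S →ᵇ ℂ) ∈ Lmc S :=
  fun μ => by simpa only [lTrans_one, map_one] using continuous_const

lemma cfc_mem_lmc {φ : ℂ → ℂ} (hφ : Continuous φ) {b : S →ᵇ ℂ} (hb : b ∈ Lmc S) :
    cfc φ b ∈ Lmc S := fun μ => by
  simp only [lTrans_cfc _ hφ, CharacterSpace.map_cfc μ hφ]
  exact hφ.comp (hb μ)

lemma star_mem_lmc {b : S →ᵇ ℂ} (hb : b ∈ Lmc S) : star b ∈ Lmc S :=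
  cfc_star_id b (R := ℂ) ▸ cfc_mem_lmc continuous_star hb

end Lmc

lemma div_max_mul_eq_min {a δ : ℝ} (hδ : 0 < δ) : δ / max a δ * a = min a δ := by
  rcases le_total a δ with h | h
  · rw [max_eq_right h, min_eq_left h, div_self hδ.ne', one_mul]
  · rw [max_eq_left h, min_eq_right h, div_mul_cancel₀ _ (hδ.trans_le h).ne']

lemma max_mul_min_le_mul_iff {a b ε δ : ℝ} (hε : 0 < ε) (hδ : 0 < δ) (h : b ≤ δ → a ≤ ε) :
    max a ε * min b δ ≤ ε * δ ↔ a ≤ ε := by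
  refine ⟨fun hle => ?_, fun ha => ?_⟩
  · by_contra! ha
    have hb : δ < b := lt_of_not_ge fun hb => ha.not_ge (h hb)
    rw [max_eq_left ha.le, min_eq_right hb.le] at hle
    exact ha.not_ge (le_of_mul_le_mul_right hle hδ)
  · rw [max_eq_right ha]
    exact mul_le_mul_of_nonneg_left (min_le_right _ _) hε.le

section Ideal

variable {S : Type*} [TopologicalSpace S] [Mul S] [SemitopologicalSemigroup S]
  {I : Set (S →ᵇ ℂ)}

lemma IsIdealLmc.eset_mem_efam_of_subset (hI : IsIdealLmc I) {g : S →ᵇ ℂ} (hg : g ∈ I)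
    {δ : ℝ} (hδ : 0 < δ) {f : S →ᵇ ℂ} (hf : f ∈ Lmc S) {ε : ℝ} (hε : 0 < ε)
    (hsub : Eset δ g ⊆ Eset ε f) : Eset ε f ∈ Efam I := by
  set ρ : ℂ → ℂ := fun z => ((δ / max ‖z‖ δ : ℝ) : ℂ)
  set σ : ℂ → ℂ := fun z => ((max ‖z‖ ε : ℝ) : ℂ)
  have hρ : Continuous ρ := Complex.continuous_ofReal.comp <|
    continuous_const.div (continuous_norm.max continuous_const) fun z =>
      (hδ.trans_le (le_max_right _ _)).ne'
  have hσ : Continuous σ := by fun_prop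
  refine ⟨cfc σ f * (cfc ρ g * g), hI.mul_mem _ (cfc_mem_lmc hσ hf) _
    (hI.mul_mem _ (cfc_mem_lmc hρ (hI.subset_lmc hg)) _ hg), ε * δ, by positivity, ?_⟩
  have hnorm (x : S) : ‖(cfc σ f * (cfc ρ g * g)) x‖ = max ‖f x‖ ε * min ‖g x‖ δ := by
    simp only [mul_apply, norm_mul, cfc_apply_of_continuous hσ, cfc_apply_of_continuous hρ, ρ, σ,
      Complex.norm_real, Real.norm_eq_abs]
    rw [abs_of_nonneg (hε.le.trans (le_max_right _ _)), abs_of_nonneg (by positivity),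
      div_max_mul_eq_min hδ]
  ext x
  simp only [Eset, Set.mem_ofPred_eq, hnorm]
  exact (max_mul_min_le_mul_iff hε hδ (@hsub x)).symm

lemma IsIdealLmc.exists_eset_subset_inter (hI : IsIdealLmc I) {k₁ k₂ : S →ᵇ ℂ} (h₁ : k₁ ∈ I)
    (h₂ : k₂ ∈ I) {δ₁ δ₂ : ℝ} (hδ₁ : 0 < δ₁) (hδ₂ : 0 < δ₂) :
    ∃ k ∈ I, ∃ η : ℝ, 0 < η ∧ Eset η k ⊆ Eset δ₁ k₁ ∩ Eset δ₂ k₂ := by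
  refine ⟨star k₁ * k₁ + star k₂ * k₂,
    hI.add_mem _ (hI.mul_mem _ (star_mem_lmc (hI.subset_lmc h₁)) _ h₁) _
      (hI.mul_mem _ (star_mem_lmc (hI.subset_lmc h₂)) _ h₂),
    min (δ₁ ^ 2) (δ₂ ^ 2), by positivity, fun x hx => ?_⟩
  have hx' : ‖k₁ x‖ ^ 2 + ‖k₂ x‖ ^ 2 ≤ min (δ₁ ^ 2) (δ₂ ^ 2) := by
    rwa [Eset, Set.mem_ofPred_eq, norm_star_mul_self_add_star_mul_self_apply] at hx
  constructor
  · refine (pow_le_pow_iff_left₀ (norm_nonneg _) hδ₁.le two_ne_zero).mp ?_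
    nlinarith [min_le_left (δ₁ ^ 2) (δ₂ ^ 2), sq_nonneg ‖k₂ x‖]
  · refine (pow_le_pow_iff_left₀ (norm_nonneg _) hδ₂.le two_ne_zero).mp ?_
    nlinarith [min_le_right (δ₁ ^ 2) (δ₂ ^ 2), sq_nonneg ‖k₁ x‖]

lemma efam_mono {J : Set (S →ᵇ ℂ)} (h : I ⊆ J) : Efam I ⊆ Efam J := by
  rintro A ⟨f, hf, ε, hε, rfl⟩
  exact ⟨f, h hf, ε, hε, rfl⟩

lemma einv_mono {𝒜 ℬ : Set (Set S)} (h : 𝒜 ⊆ ℬ) : Einv 𝒜 ⊆ Einv ℬ :=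
  fun _ hf => ⟨hf.1, fun ε hε => h (hf.2 ε hε)⟩

lemma efam_einv_subset (𝒜 : Set (Set S)) : Efam (Einv 𝒜) ⊆ 𝒜 := by
  rintro A ⟨f, hf, ε, hε, rfl⟩
  exact hf.2 ε hε

lemma subset_einv_efam (hI : I ⊆ Lmc S) : I ⊆ Einv (Efam I) :=
  fun f hf => ⟨hI hf, fun ε hε => ⟨f, hf, ε, hε, rfl⟩⟩

lemma efam_einv_efam (hI : I ⊆ Lmc S) : Efam (Einv (Efam I)) = Efam I :=
  (efam_einv_subset _).antisymm (efam_mono (subset_einv_efam hI))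

lemma IsIdealLmc.add_mem_einv_efam (hI : IsIdealLmc I) {f g : S →ᵇ ℂ} (hf : f ∈ Einv (Efam I))
    (hg : g ∈ Einv (Efam I)) : f + g ∈ Einv (Efam I) := by
  refine ⟨add_mem_lmc hf.1 hg.1, fun ε hε => ?_⟩
  obtain ⟨k₁, hk₁, δ₁, hδ₁, hf'⟩ := hf.2 (ε / 2) (by positivity)
  obtain ⟨k₂, hk₂, δ₂, hδ₂, hg'⟩ := hg.2 (ε / 2) (by positivity)
  obtain ⟨k, hk, η, hη, hsub⟩ := hI.exists_eset_subset_inter hk₁ hk₂ hδ₁ hδ₂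
  refine hI.eset_mem_efam_of_subset hk hη (add_mem_lmc hf.1 hg.1) hε fun x hx => ?_
  rw [← hf', ← hg'] at hsub
  obtain ⟨hfx, hgx⟩ := hsub hx
  calc ‖f x + g x‖ ≤ ‖f x‖ + ‖g x‖ := norm_add_le _ _
    _ ≤ ε / 2 + ε / 2 := add_le_add hfx hgx
    _ = ε := add_halves ε

lemma IsIdealLmc.mul_mem_einv_efam (hI : IsIdealLmc I) {w g : S →ᵇ ℂ} (hw : w ∈ Lmc S)
    (hg : g ∈ Einv (Efam I)) : w * g ∈ Einv (Efam I) := by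
  refine ⟨mul_mem_lmc hw hg.1, fun ε hε => ?_⟩
  have hw1 : 0 < ‖w‖ + 1 := by positivity
  obtain ⟨k, hk, δ, hδ, hg'⟩ := hg.2 (ε / (‖w‖ + 1)) (by positivity)
  refine hI.eset_mem_efam_of_subset hk hδ (mul_mem_lmc hw hg.1) hε fun x hx => ?_
  have hgx : ‖g x‖ ≤ ε / (‖w‖ + 1) := by rw [← hg'] at hx; exact hx
  calc ‖w x * g x‖ = ‖w x‖ * ‖g x‖ := norm_mul _ _
    _ ≤ (‖w‖ + 1) * (ε / (‖w‖ + 1)) :=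
      mul_le_mul ((w.norm_coe_le_norm x).trans (le_add_of_nonneg_right zero_le_one)) hgx
        (norm_nonneg _) hw1.le
    _ = ε := mul_div_cancel₀ ε hw1.ne'

lemma IsIdealLmc.einv_efam (hI : IsIdealLmc I) : IsIdealLmc (Einv (Efam I)) where
  subset_lmc _ hf := hf.1
  zero_mem := subset_einv_efam hI.subset_lmc hI.zero_mem
  add_mem _ hf _ hg := hI.add_mem_einv_efam hf hg
  mul_mem _ hw _ hg := hI.mul_mem_einv_efam hw hg

lemma IsIdealLmc.isEIdeal_einv_efam (hI : IsIdealLmc I) : IsEIdeal (Einv (Efam I)) :=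
  ⟨hI.einv_efam, congrArg Einv (efam_einv_efam hI.subset_lmc)⟩

lemma IsEIdeal.einv_efam_subset {J : Set (S →ᵇ ℂ)} (hJ : IsEIdeal J) (hIJ : I ⊆ J) :
    Einv (Efam I) ⊆ J :=
  hJ.2 ▸ einv_mono (efam_mono hIJ)

lemma IsIdealLmc.eq_lmc_of_one_mem (hI : IsIdealLmc I) (h1 : 1 ∈ I) : I = Lmc S :=
  hI.subset_lmc.antisymm fun w hw => mul_one w ▸ hI.mul_mem w hw 1 h1

lemma IsIdealLmc.one_mem_of_lt_norm (hI : IsIdealLmc I) {k : S →ᵇ ℂ} (hk : k ∈ I) {δ : ℝ}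
    (hδ : 0 < δ) (hlt : ∀ x, δ < ‖k x‖) : 1 ∈ I := by
  -- `φ z = z⁻¹` wherever `δ < |z|`
  set φ : ℂ → ℂ := fun z => star z / ((max (‖z‖ ^ 2) (δ ^ 2) : ℝ) : ℂ)
  have hφ : Continuous φ := continuous_star.div
    (Complex.continuous_ofReal.comp ((continuous_norm.pow 2).max continuous_const)) fun z =>
      Complex.ofReal_ne_zero.mpr ((pow_pos hδ 2).trans_le (le_max_right _ _)).ne'
  have hinv : cfc φ k * k = 1 := by
    ext x
    have hkx : (‖k x‖ : ℂ) ≠ 0 := Complex.ofReal_ne_zero.mpr (hδ.trans (hlt x)).ne'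
    rw [mul_apply, cfc_apply_of_continuous hφ, coe_one, Pi.one_apply]
    dsimp only [φ]
    rw [max_eq_left (pow_le_pow_left₀ hδ.le (hlt x).le 2), div_mul_eq_mul_div, Complex.star_def,
      RCLike.conj_mul, Complex.ofReal_pow]
    exact div_self (pow_ne_zero 2 hkx)
  exact hinv ▸ hI.mul_mem _ (cfc_mem_lmc hφ (hI.subset_lmc hk)) _ hk

lemma IsIdealLmc.einv_efam_ne_lmc (hI : IsIdealLmc I) (hne : I ≠ Lmc S) :
    Einv (Efam I) ≠ Lmc S := by
  intro h
  obtain ⟨k, hk, δ, hδ, hE⟩ := (h ▸ one_mem_lmc : (1 : S →ᵇ ℂ) ∈ Einv (Efam I)).2 (1 / 2)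
    one_half_pos
  refine hne (hI.eq_lmc_of_one_mem (hI.one_mem_of_lt_norm hk hδ fun x => ?_))
  by_contra! hx
  have hx1 : x ∈ Eset (1 / 2) (1 : S →ᵇ ℂ) := hE ▸ hx
  norm_num [Eset] at hx1

lemma IsMaximalIdealLmc.isEIdeal {M : Set (S →ᵇ ℂ)} (hM : IsMaximalIdealLmc M) : IsEIdeal M :=
  ⟨hM.1, hM.2.2 _ hM.1.einv_efam (hM.1.einv_efam_ne_lmc hM.2.1)
    (subset_einv_efam hM.1.subset_lmc)⟩

end Ideal

theorem stmt12_general {S : Type*} [TopologicalSpace S] [Semigroup S]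
    [SemitopologicalSemigroup S] (I : Set (S →ᵇ ℂ)) (hI : IsIdealLmc I) :
    IsEIdeal (Einv (Efam I)) ∧ I ⊆ Einv (Efam I) ∧
    (∀ J : Set (S →ᵇ ℂ), IsEIdeal J → I ⊆ J → Einv (Efam I) ⊆ J) ∧
    (∀ M : Set (S →ᵇ ℂ), IsMaximalIdealLmc M → IsEIdeal M) :=
  ⟨hI.isEIdeal_einv_efam, subset_einv_efam hI.subset_lmc, fun _ hJ hIJ => hJ.einv_efam_subset hIJ,
    fun _ hM => hM.isEIdeal⟩

theorem stmt12 {S : Type*} [TopologicalSpace S] [T2Space S] [Semigroup S]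
    [SemitopologicalSemigroup S] (I : Set (S →ᵇ ℂ)) (hI : IsIdealLmc I) :
    IsEIdeal (Einv (Efam I)) ∧ I ⊆ Einv (Efam I) ∧
    (∀ J : Set (S →ᵇ ℂ), IsEIdeal J → I ⊆ J → Einv (Efam I) ⊆ J) ∧
    (∀ M : Set (S →ᵇ ℂ), IsMaximalIdealLmc M → IsEIdeal M) :=
  stmt12_general I hI
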